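/- If Z is statistically independent of the pair (X, Y), then the PLMMSE estimator of X from (Y, Z) equals the LMMSE estimator of X from Y: X̂ = Γ_{XY} Γ_{YY}† (Y − E[Y]) + E[X]. -/

import Mathlib

/-!
Independence of `Z` from `(X, Y)` makes conditioning on `Z` the same as taking expectations, so
a.s. `E[X|Z] = E[X]` and the innovation `Ỹ` is the centred `Y - E[Y]`. Cross-covariances only
depend on a.e. classes and are invariant under constant shifts, hence `Γ_{XỸ} = Γ_{XY}` and
`Γ_{ỸỸ} = Γ_{YY}`; by uniqueness of the Moore–Penrose inverse the two estimators coincide.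
-/

open MeasureTheory Matrix ProbabilityTheory

noncomputable def condExpVec {Ω : Type} {mΩ : MeasurableSpace Ω} (μ : Measure Ω)
    (m : MeasurableSpace Ω) {N : ℕ} (Y : Ω → Fin N → ℝ) : Ω → Fin N → ℝ :=
  fun ω i => (μ[(fun ω' => Y ω' i)|m]) ω

noncomputable def meanVec {Ω : Type} {mΩ : MeasurableSpace Ω} (μ : Measure Ω)
    {N : ℕ} (Y : Ω → Fin N → ℝ) : Fin N → ℝ := fun i => ∫ ω, Y ω i ∂μ

noncomputable def crossCov {Ω : Type} {mΩ : MeasurableSpace Ω} (μ : Measure Ω)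
    {M N : ℕ} (X : Ω → Fin M → ℝ) (Y : Ω → Fin N → ℝ) : Matrix (Fin M) (Fin N) ℝ :=
  Matrix.of fun i j => ∫ ω, (X ω i - meanVec μ X i) * (Y ω j - meanVec μ Y j) ∂μ

/-- The residual `Y - E[Y|m]` (the innovation `Ỹ`). -/
noncomputable def resid {Ω : Type} {mΩ : MeasurableSpace Ω} (μ : Measure Ω)
    (m : MeasurableSpace Ω) {N : ℕ} (Y : Ω → Fin N → ℝ) : Ω → Fin N → ℝ :=
  fun ω => Y ω - condExpVec (mΩ := mΩ) μ m Y ω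

def IsMoorePenrose {m n : ℕ} (A : Matrix (Fin m) (Fin n) ℝ) (P : Matrix (Fin n) (Fin m) ℝ) : Prop :=
  A * P * A = A ∧ P * A * P = P ∧ (A * P)ᵀ = A * P ∧ (P * A)ᵀ = P * A

/-- The PLMMSE estimator `X̂ = Γ_{XỸ} Γ_{ỸỸ}† Ỹ + E[X|Z]`, where `P` is a matrix
playing the role of the Moore–Penrose pseudo-inverse `Γ_{ỸỸ}†`. -/
noncomputable def plmmse {Ω : Type} {mΩ : MeasurableSpace Ω} (μ : Measure Ω)
    {M N Q : ℕ} (X : Ω → Fin M → ℝ) (Y : Ω → Fin N → ℝ) (Z : Ω → Fin Q → ℝ)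
    (P : Matrix (Fin N) (Fin N) ℝ) : Ω → Fin M → ℝ :=
  fun ω =>
    (crossCov μ X (resid μ (MeasurableSpace.comap Z inferInstance) Y) * P).mulVec
      (resid μ (MeasurableSpace.comap Z inferInstance) Y ω) +
    condExpVec μ (MeasurableSpace.comap Z inferInstance) X ω

namespace IsMoorePenrose

variable {m n : ℕ} {A : Matrix (Fin m) (Fin n) ℝ} {P P' : Matrix (Fin n) (Fin m) ℝ}

lemma transpose (h : IsMoorePenrose A P) : IsMoorePenrose Aᵀ Pᵀ := by
  obtain ⟨hAPA, hPAP, hAP, hPA⟩ := h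
  refine ⟨?_, ?_, ?_, ?_⟩
  · rw [← transpose_mul, ← transpose_mul, ← Matrix.mul_assoc, hAPA]
  · rw [← transpose_mul, ← transpose_mul, ← Matrix.mul_assoc, hPAP]
  · rw [← transpose_mul, transpose_transpose, hPA]
  · rw [← transpose_mul, transpose_transpose, hAP]

lemma mul_left_eq (h : IsMoorePenrose A P) (h' : IsMoorePenrose A P') : A * P = A * P' := by
  obtain ⟨hAPA, -, hAP, -⟩ := h
  obtain ⟨hAP'A, -, hAP', -⟩ := h'
  calc A * P = Pᵀ * Aᵀ := by rw [← transpose_mul, hAP]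
    _ = Pᵀ * (Aᵀ * (A * P')) := by
        conv_lhs => rw [← hAP'A, transpose_mul, hAP']
    _ = A * P * A * P' := by
        rw [← Matrix.mul_assoc, ← transpose_mul, hAP, ← Matrix.mul_assoc]
    _ = A * P' := by rw [hAPA]

lemma unique (h : IsMoorePenrose A P) (h' : IsMoorePenrose A P') : P = P' := by
  have hPA : P * A = P' * A := by
    simpa using congrArg Matrix.transpose (h.transpose.mul_left_eq h'.transpose)
  calc P = P * A * P := h.2.1.symm
    _ = P' * (A * P') := by rw [hPA, Matrix.mul_assoc, h.mul_left_eq h']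
    _ = P' := by rw [← Matrix.mul_assoc, h'.2.1]

end IsMoorePenrose

section Moments

variable {Ω : Type} [MeasurableSpace Ω] {μ : Measure Ω} {M N : ℕ}

lemma meanVec_congr_ae {Y Y' : Ω → Fin N → ℝ} (h : Y =ᵐ[μ] Y') : meanVec μ Y = meanVec μ Y' :=
  funext fun j => integral_congr_ae (h.mono fun _ hω => congrFun hω j)

lemma crossCov_congr_ae {X X' : Ω → Fin M → ℝ} {Y Y' : Ω → Fin N → ℝ}
    (hX : X =ᵐ[μ] X') (hY : Y =ᵐ[μ] Y') : crossCov μ X Y = crossCov μ X' Y' := by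
  ext i j
  simp only [crossCov, of_apply, meanVec_congr_ae hX, meanVec_congr_ae hY]
  exact integral_congr_ae (by filter_upwards [hX, hY] with ω hXω hYω; rw [hXω, hYω])

variable [IsProbabilityMeasure μ]

lemma meanVec_sub_const {Y : Ω → Fin N → ℝ} (hY : ∀ j, Integrable (fun ω => Y ω j) μ)
    (c : Fin N → ℝ) : meanVec μ (fun ω => Y ω - c) = meanVec μ Y - c := by
  ext j
  simp [meanVec, integral_sub (hY j) (integrable_const _)]

lemma crossCov_sub_const_left {X : Ω → Fin M → ℝ} (hX : ∀ i, Integrable (fun ω => X ω i) μ)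
    (c : Fin M → ℝ) (Y : Ω → Fin N → ℝ) :
    crossCov μ (fun ω => X ω - c) Y = crossCov μ X Y := by
  ext i j
  simp [crossCov, meanVec_sub_const hX]

lemma crossCov_sub_const_right (X : Ω → Fin M → ℝ) {Y : Ω → Fin N → ℝ}
    (hY : ∀ j, Integrable (fun ω => Y ω j) μ) (c : Fin N → ℝ) :
    crossCov μ X (fun ω => Y ω - c) = crossCov μ X Y := by
  ext i j
  simp [crossCov, meanVec_sub_const hY]

end Moments

section Independence

variable {Ω β : Type} [MeasurableSpace Ω] [MeasurableSpace β] {μ : Measure Ω}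
  [IsProbabilityMeasure μ] {Z : Ω → β}

lemma condExp_comap_ae_eq_integral_of_indepFun (hZ : Measurable Z) {f : Ω → ℝ}
    (hf : Measurable f) (hind : IndepFun f Z μ) :
    μ[f | MeasurableSpace.comap Z inferInstance] =ᵐ[μ] fun _ => ∫ ω, f ω ∂μ :=
  condExp_indep_eq hf.comap_le hZ.comap_le (comap_measurable f).stronglyMeasurable hind

variable {N : ℕ} {Y : Ω → Fin N → ℝ}

lemma condExpVec_comap_ae_eq_meanVec (hZ : Measurable Z) (hY : Measurable Y)
    (hind : IndepFun Y Z μ) :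
    condExpVec μ (MeasurableSpace.comap Z inferInstance) Y =ᵐ[μ] fun _ => meanVec μ Y := by
  have h j := condExp_comap_ae_eq_integral_of_indepFun hZ ((measurable_pi_apply j).comp hY)
    (hind.comp (measurable_pi_apply j) measurable_id)
  filter_upwards [ae_all_iff.2 h] with ω hω
  exact funext hω

lemma resid_comap_ae_eq_sub_meanVec (hZ : Measurable Z) (hY : Measurable Y)
    (hind : IndepFun Y Z μ) :
    resid μ (MeasurableSpace.comap Z inferInstance) Y =ᵐ[μ] fun ω => Y ω - meanVec μ Y :=
  (condExpVec_comap_ae_eq_meanVec hZ hY hind).mono fun ω hω => congrArg (Y ω - ·) hω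

end Independence

theorem stmt8_general {Ω : Type} [MeasurableSpace Ω] (μ : Measure Ω) [IsProbabilityMeasure μ]
    {M N Q : ℕ} (X : Ω → Fin M → ℝ) (Y : Ω → Fin N → ℝ) (Z : Ω → Fin Q → ℝ)
    (hXm : Measurable X) (hYm : Measurable Y) (hZm : Measurable Z)
    (hY2 : ∀ i, MemLp (fun ω => Y ω i) 2 μ)
    (hind : IndepFun (fun ω => (X ω, Y ω)) Z μ)
    (P : Matrix (Fin N) (Fin N) ℝ)
    (hP : IsMoorePenrose
      (crossCov μ (resid μ (MeasurableSpace.comap Z inferInstance) Y)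
        (resid μ (MeasurableSpace.comap Z inferInstance) Y)) P)
    (P' : Matrix (Fin N) (Fin N) ℝ) (hP' : IsMoorePenrose (crossCov μ Y Y) P') :
    plmmse μ X Y Z P =ᵐ[μ] fun ω =>
      (crossCov μ X Y * P').mulVec (Y ω - meanVec μ Y) + meanVec μ X := by
  have hXZ : IndepFun X Z μ := hind.comp measurable_fst measurable_id
  have hYZ : IndepFun Y Z μ := hind.comp measurable_snd measurable_id
  have hY1 j : Integrable (fun ω => Y ω j) μ := (hY2 j).integrable one_le_two
  have hres := resid_comap_ae_eq_sub_meanVec hZm hYm hYZ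
  have hcovX : crossCov μ X (resid μ (MeasurableSpace.comap Z inferInstance) Y) =
      crossCov μ X Y := by
    rw [crossCov_congr_ae .rfl hres, crossCov_sub_const_right X hY1]
  have hcovY : crossCov μ (resid μ (MeasurableSpace.comap Z inferInstance) Y)
      (resid μ (MeasurableSpace.comap Z inferInstance) Y) = crossCov μ Y Y := by
    rw [crossCov_congr_ae hres hres, crossCov_sub_const_left hY1, crossCov_sub_const_right Y hY1]
  have hPP' : P = P' := (hcovY ▸ hP).unique hP'
  filter_upwards [hres, condExpVec_comap_ae_eq_meanVec hZm hXm hXZ] with ω hYω hXω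
  simp only [plmmse, hcovX, hPP', hYω, hXω]

/-- if `Z` is independent of the pair `(X, Y)`, the PLMMSE estimator
equals the LMMSE estimator of `X` from `Y`. -/
theorem stmt8 {Ω : Type} [MeasurableSpace Ω] (μ : Measure Ω) [IsProbabilityMeasure μ]
    {M N Q : ℕ} (X : Ω → Fin M → ℝ) (Y : Ω → Fin N → ℝ) (Z : Ω → Fin Q → ℝ)
    (hXm : Measurable X) (hYm : Measurable Y) (hZm : Measurable Z)
    (hX2 : ∀ i, MemLp (fun ω => X ω i) 2 μ) (hY2 : ∀ i, MemLp (fun ω => Y ω i) 2 μ)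
    (hind : IndepFun (fun ω => (X ω, Y ω)) Z μ)
    (P : Matrix (Fin N) (Fin N) ℝ)
    (hP : IsMoorePenrose
      (crossCov μ (resid μ (MeasurableSpace.comap Z inferInstance) Y)
        (resid μ (MeasurableSpace.comap Z inferInstance) Y)) P)
    (P' : Matrix (Fin N) (Fin N) ℝ) (hP' : IsMoorePenrose (crossCov μ Y Y) P') :
    plmmse μ X Y Z P =ᵐ[μ] fun ω =>
      (crossCov μ X Y * P').mulVec (Y ω - meanVec μ Y) + meanVec μ X :=
  stmt8_general μ X Y Z hXm hYm hZm hY2 hind P hP P' hP'
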